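/- Fix an LF order ≼ on F and a lex column order ≤ on V. Let X, Y ∈ F with X nonempty and |X| ≤ |Y|, such that left(X) ∉ Y and right(X) ∈ Y, and such that every Z ∈ F with Z ≺ Y satisfies (left(X) ∈ Z ⟺ right(X) ∈ Z) (i.e., left(X) and right(X) lie in the same part of the partition obtained by refining by all sets preceding Y in LF order). Then Max(X) is defined and Y = Max(X). -/

import Mathlib

/-- Two sets `X` and `Y` overlap if `X ∩ Y ≠ ∅`, `X \ Y ≠ ∅` and `Y \ X ≠ ∅`. -/
def Overlaps {V : Type*} [DecidableEq V] (X Y : Finset V) : Prop :=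
  (X ∩ Y).Nonempty ∧ (X \ Y).Nonempty ∧ (Y \ X).Nonempty

/-!
For a lex column order, the points that lie in the same sets among those preceding a given set
form intervals: at the first set separating a point `u` between `l` and `r` from both, the lex
condition would put `u` both outside it (compared with `r`) and inside it (compared with `l`).
Hence all of `X ⊆ [left X, right X]` lies in one such class below `Y`, so no set preceding `Y`
overlaps `X`, while `Y` itself does because `|X| ≤ |Y|`.
-/

section LexColumnOrder

variable {ι V : Type*} [LinearOrder ι]

def AgreeBelow (S : ι → Set V) (i : ι) (v w : V) : Prop :=
  ∀ j < i, (v ∈ S j ↔ w ∈ S j)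

def IsLexColumnOrder [LinearOrder V] (S : ι → Set V) : Prop :=
  ∀ v w, v < w → ∀ i, ¬(v ∈ S i ↔ w ∈ S i) → AgreeBelow S i v w → v ∉ S i ∧ w ∈ S i

theorem exists_first_disagreement [WellFoundedLT ι] {S : ι → Set V} {i : ι} {v w : V}
    (h : ¬AgreeBelow S i v w) :
    ∃ j < i, ¬(v ∈ S j ↔ w ∈ S j) ∧ AgreeBelow S j v w := by
  obtain ⟨j, ⟨hji, hj⟩, hmin⟩ :=
    wellFounded_lt.has_min {j | j < i ∧ ¬(v ∈ S j ↔ w ∈ S j)}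
      (by simpa [AgreeBelow, Set.Nonempty] using h)
  exact ⟨j, hji, hj, fun k hkj => by_contra fun hk => hmin k ⟨hkj.trans hji, hk⟩ hkj⟩

theorem IsLexColumnOrder.agreeBelow_of_le_of_le [WellFoundedLT ι] [LinearOrder V]
    {S : ι → Set V} (hS : IsLexColumnOrder S) {i : ι} {l u r : V} (hlr : AgreeBelow S i l r)
    (hlu : l ≤ u) (hur : u ≤ r) : AgreeBelow S i l u := by
  by_contra hnot
  obtain ⟨j, hji, hj, hbelow⟩ := exists_first_disagreement hnot
  have hj' : ¬(u ∈ S j ↔ r ∈ S j) := by rw [← hlr j hji]; tauto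
  have hbelow' : AgreeBelow S j u r := fun k hk =>
    (hbelow k hk).symm.trans (hlr k (hk.trans hji))
  have hu_in := (hS l u (hlu.lt_of_ne fun e => hj (e ▸ Iff.rfl)) j hj hbelow).2
  have hu_out := (hS u r (hur.lt_of_ne fun e => hj' (e ▸ Iff.rfl)) j hj' hbelow').1
  exact hu_out hu_in

end LexColumnOrder

section Overlaps

variable {V : Type*} [DecidableEq V] {X Y Z : Finset V}

theorem overlaps_of_card_le (hXY : X.card ≤ Y.card) (hinter : (Y ∩ X).Nonempty)
    (hdiff : (X \ Y).Nonempty) : Overlaps Y X := by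
  refine ⟨hinter, Finset.sdiff_nonempty.mpr fun hYX => ?_, hdiff⟩
  obtain ⟨l, hl⟩ := hdiff
  rw [Finset.mem_sdiff] at hl
  exact (Finset.card_lt_card ⟨hYX, fun hXY => hl.2 (hXY hl.1)⟩).not_ge hXY

theorem Overlaps.exists_mem_not_iff (h : Overlaps Z X) (l : V) :
    ∃ u ∈ X, ¬(u ∈ Z ↔ l ∈ Z) := by
  by_cases hl : l ∈ Z
  · obtain ⟨u, hu⟩ := h.2.2
    rw [Finset.mem_sdiff] at hu
    exact ⟨u, hu.1, by simp [hu.2, hl]⟩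
  · obtain ⟨u, hu⟩ := h.1
    rw [Finset.mem_inter] at hu
    exact ⟨u, hu.2, by simp [hu.1, hl]⟩

end Overlaps

theorem stmt11_general {V : Type*} [DecidableEq V]
    (F : Finset (Finset V))
    (lo : LinearOrder {X : Finset V // X ∈ F})
    (lv : LinearOrder V)
    (hlex : ∀ v w : V, lv.lt v w →
      ∀ Z : {X : Finset V // X ∈ F},
        ¬(v ∈ (Z : Finset V) ↔ w ∈ (Z : Finset V)) →
        (∀ Z' : {X : Finset V // X ∈ F}, lo.lt Z' Z →
          (v ∈ (Z' : Finset V) ↔ w ∈ (Z' : Finset V))) →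
        v ∉ (Z : Finset V) ∧ w ∈ (Z : Finset V))
    (X Y : {X : Finset V // X ∈ F})
    (l r : V)
    (hl : l ∈ (X : Finset V) ∧ ∀ u ∈ (X : Finset V), lv.le l u)
    (hr : r ∈ (X : Finset V) ∧ ∀ u ∈ (X : Finset V), lv.le u r)
    (hcard : (X : Finset V).card ≤ (Y : Finset V).card)
    (hlY : l ∉ (Y : Finset V)) (hrY : r ∈ (Y : Finset V))
    (hprev : ∀ Z : {X : Finset V // X ∈ F}, lo.lt Z Y →
      (l ∈ (Z : Finset V) ↔ r ∈ (Z : Finset V))) :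
    Overlaps (Y : Finset V) (X : Finset V) ∧
    (∀ Z : {X : Finset V // X ∈ F},
      (X : Finset V).card ≤ (Z : Finset V).card →
      Overlaps (Z : Finset V) (X : Finset V) → lo.le Y Z) := by
  let _ := lo
  let _ := lv
  -- `↥F` also inherits the inclusion order of `Finset V`, so `lo` has to be named here.
  have : @WellFoundedLT _ lo.toLT := @Finite.to_wellFoundedLT _ _ lo.toPreorder
  let S : {X : Finset V // X ∈ F} → Set V := fun Z => (Z : Finset V)
  have hS : IsLexColumnOrder S := hlex
  refine ⟨overlaps_of_card_le hcard ⟨r, Finset.mem_inter.mpr ⟨hrY, hr.1⟩⟩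
    ⟨l, Finset.mem_sdiff.mpr ⟨hl.1, hlY⟩⟩, fun Z _ hZX => le_of_not_gt fun hZY => ?_⟩
  obtain ⟨u, huX, hu⟩ := hZX.exists_mem_not_iff l
  exact hu (hS.agreeBelow_of_le_of_le (S := S) hprev (hl.2 u huX) (hr.2 u huX) Z hZY).symm

/-- Fix an LF order `lo` on `F` and a lex column order `lv` on `V`. Let
`X, Y ∈ F` with `X` nonempty, `|X| ≤ |Y|`, `left(X) ∉ Y`, `right(X) ∈ Y`, and
such that every `Z ≺ Y` contains `left(X)` iff it contains `right(X)`. Then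
`Max(X)` is defined and `Y = Max(X)`. -/
theorem stmt11 {V : Type*} [Fintype V] [DecidableEq V]
    (F : Finset (Finset V))
    (lo : LinearOrder {X : Finset V // X ∈ F})
    (hLF : ∀ A B : {X : Finset V // X ∈ F},
      (B : Finset V).card < (A : Finset V).card → lo.lt A B)
    (lv : LinearOrder V)
    (hlex : ∀ v w : V, lv.lt v w →
      ∀ Z : {X : Finset V // X ∈ F},
        ¬(v ∈ (Z : Finset V) ↔ w ∈ (Z : Finset V)) →
        (∀ Z' : {X : Finset V // X ∈ F}, lo.lt Z' Z →
          (v ∈ (Z' : Finset V) ↔ w ∈ (Z' : Finset V))) →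
        v ∉ (Z : Finset V) ∧ w ∈ (Z : Finset V))
    (X Y : {X : Finset V // X ∈ F}) (hXne : (X : Finset V).Nonempty)
    (l r : V)
    (hl : l ∈ (X : Finset V) ∧ ∀ u ∈ (X : Finset V), lv.le l u)
    (hr : r ∈ (X : Finset V) ∧ ∀ u ∈ (X : Finset V), lv.le u r)
    (hcard : (X : Finset V).card ≤ (Y : Finset V).card)
    (hlY : l ∉ (Y : Finset V)) (hrY : r ∈ (Y : Finset V))
    (hprev : ∀ Z : {X : Finset V // X ∈ F}, lo.lt Z Y →
      (l ∈ (Z : Finset V) ↔ r ∈ (Z : Finset V))) :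
    Overlaps (Y : Finset V) (X : Finset V) ∧
    (∀ Z : {X : Finset V // X ∈ F},
      (X : Finset V).card ≤ (Z : Finset V).card →
      Overlaps (Z : Finset V) (X : Finset V) → lo.le Y Z) :=
  stmt11_general F lo lv hlex X Y l r hl hr hcard hlY hrY hprev
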